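/- arXiv:2501.08877 — 4 statements merged into one kernel-verified Lean document; each statement's English description precedes it below -/
import Mathlib

section
/- Let u, v : ℝᵈ → ℝ be smooth with compact support and w(x) = exp(‖x‖²/(2c)) with c > 0. Then ∫ u(x) · ∇·(∇(v·w)(x) · w(x)⁻¹) · w(x) dx = −∫ ⟨∇(u·w)(x)·w(x)⁻¹, ∇(v·w)(x)·w(x)⁻¹⟩ · w(x) dx, where ⟨·,·⟩ is the Euclidean inner product. -/
open MeasureTheory RealInnerProductSpace

noncomputable def wgt (d : ℕ) (c : ℝ) (x : EuclideanSpace ℝ (Fin d)) : ℝ :=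
  Real.exp (‖x‖ ^ 2 / (2 * c))

noncomputable def lapE (d : ℕ) (f : EuclideanSpace ℝ (Fin d) → ℝ) (x : EuclideanSpace ℝ (Fin d)) : ℝ :=
  ∑ i, fderiv ℝ (fun y => fderiv ℝ f y (EuclideanSpace.single i 1)) x (EuclideanSpace.single i 1)

noncomputable def divE (d : ℕ) (F : EuclideanSpace ℝ (Fin d) → EuclideanSpace ℝ (Fin d)) (x : EuclideanSpace ℝ (Fin d)) : ℝ :=
  ∑ i, fderiv ℝ F x (EuclideanSpace.single i 1) i

lemma wgt_contDiff (d : ℕ) (c : ℝ) : ContDiff ℝ (⊤ : ℕ∞) (wgt d c) := by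
  have : wgt d c = fun x => Real.exp (‖x‖ ^ 2 / (2 * c)) := rfl
  rw [this]
  exact Real.contDiff_exp.comp ((contDiff_norm_sq ℝ).div_const _)

lemma wgt_pos (d : ℕ) (c : ℝ) (x : EuclideanSpace ℝ (Fin d)) : 0 < wgt d c x :=
  Real.exp_pos _

lemma gradient_contDiff {d : ℕ} {f : EuclideanSpace ℝ (Fin d) → ℝ}
    (hf : ContDiff ℝ (⊤ : ℕ∞) f) : ContDiff ℝ (⊤ : ℕ∞) (fun x => gradient f x) := by
  have : (fun x => gradient f x)
      = fun x => (InnerProductSpace.toDual ℝ (EuclideanSpace ℝ (Fin d))).symm (fderiv ℝ f x) := rfl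
  rw [this]
  exact (InnerProductSpace.toDual ℝ _).symm.contDiff.comp (hf.fderiv_right (by simp))

lemma gradient_coord {d : ℕ} (f : EuclideanSpace ℝ (Fin d) → ℝ) (x : EuclideanSpace ℝ (Fin d))
    (i : Fin d) : gradient f x i = fderiv ℝ f x (EuclideanSpace.single i 1) := by
  have h1 : ⟪gradient f x, EuclideanSpace.single i 1⟫
      = fderiv ℝ f x (EuclideanSpace.single i 1) := InnerProductSpace.toDual_symm_apply
  rw [← h1, PiLp.inner_apply]
  simp [EuclideanSpace.single_apply]

lemma inner_gradient {d : ℕ} (f : EuclideanSpace ℝ (Fin d) → ℝ) (x y : EuclideanSpace ℝ (Fin d)) :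
    ⟪gradient f x, y⟫ = fderiv ℝ f x y :=
  InnerProductSpace.toDual_symm_apply

theorem stmt_4 (d : ℕ) (hd : 1 ≤ d) (c : ℝ) (hc : 0 < c)
    (u v : EuclideanSpace ℝ (Fin d) → ℝ)
    (hu : ContDiff ℝ (⊤ : ℕ∞) u) (hus : HasCompactSupport u)
    (hv : ContDiff ℝ (⊤ : ℕ∞) v) (hvs : HasCompactSupport v) :
    ∫ x, u x * divE d (fun y => (wgt d c y)⁻¹ • gradient (fun z => v z * wgt d c z) y) x * wgt d c x
      = -∫ x, ⟪(wgt d c x)⁻¹ • gradient (fun z => u z * wgt d c z) x,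
               (wgt d c x)⁻¹ • gradient (fun z => v z * wgt d c z) x⟫ * wgt d c x := by
  have hW : ContDiff ℝ (⊤ : ℕ∞) (wgt d c) := wgt_contDiff d c
  have hWne : ∀ x, wgt d c x ≠ 0 := fun x => (wgt_pos d c x).ne'
  set G : EuclideanSpace ℝ (Fin d) → EuclideanSpace ℝ (Fin d) :=
    fun y => (wgt d c y)⁻¹ • gradient (fun z => v z * wgt d c z) y with hGdef
  have hGc : ContDiff ℝ (⊤ : ℕ∞) G := (hW.inv hWne).smul (gradient_contDiff (hv.mul hW))
  set g : EuclideanSpace ℝ (Fin d) → ℝ := fun y => u y * wgt d c y with hgdef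
  have hgc : ContDiff ℝ (⊤ : ℕ∞) g := hu.mul hW
  have hgs : HasCompactSupport g := hus.mul_right
  have hGi : ∀ i : Fin d, ContDiff ℝ (⊤ : ℕ∞) (fun y => G y i) := fun i =>
    (EuclideanSpace.proj (𝕜 := ℝ) i).contDiff.comp hGc
  have hfderivGi : ∀ (i : Fin d) x, fderiv ℝ G x (EuclideanSpace.single i 1) i
      = fderiv ℝ (fun y => G y i) x (EuclideanSpace.single i 1) := by
    intro i x
    have h : (fun y => G y i) = (EuclideanSpace.proj (𝕜 := ℝ) i) ∘ G := rfl
    rw [h, fderiv_comp (x := x) (EuclideanSpace.proj (𝕜 := ℝ) i).differentiableAt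
      ((hGc.differentiable (by simp)) x)]
    rw [ContinuousLinearMap.fderiv]
    simp
  -- integrability
  have hcfg : Continuous fun x => fderiv ℝ g x := hgc.continuous_fderiv (by simp)
  have intA : ∀ i : Fin d, Integrable
      (fun x => g x * fderiv ℝ (fun y => G y i) x (EuclideanSpace.single i 1)) volume := by
    intro i
    refine Continuous.integrable_of_hasCompactSupport
      (hgc.continuous.mul ?_) (hgs.mul_right)
    exact ((hGi i).continuous_fderiv (by simp)).clm_apply continuous_const
  have intB : ∀ i : Fin d, Integrable
      (fun x => fderiv ℝ g x (EuclideanSpace.single i 1) * G x i) volume := by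
    intro i
    refine Continuous.integrable_of_hasCompactSupport
      ((hcfg.clm_apply continuous_const).mul ((hGi i).continuous)) ?_
    exact ((hgs.fderiv ℝ).comp_left (g := fun L : _ →L[ℝ] ℝ => L (EuclideanSpace.single i 1))
      (by simp)).mul_right
  have intC : ∀ i : Fin d, Integrable (fun x => g x * G x i) volume := by
    intro i
    exact Continuous.integrable_of_hasCompactSupport
      (hgc.continuous.mul ((hGi i).continuous)) (hgs.mul_right)
  -- LHS rewriting
  have L1 : ∫ x, u x * divE d G x * wgt d c x
      = ∑ i : Fin d, ∫ x, g x * fderiv ℝ (fun y => G y i) x (EuclideanSpace.single i 1) := by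
    rw [← integral_finset_sum _ (fun i _ => intA i)]
    congr 1 with x
    rw [divE, Finset.mul_sum, Finset.sum_mul]
    refine Finset.sum_congr rfl fun i _ => ?_
    rw [hfderivGi i x]
    simp only [hgdef]
    ring
  -- RHS rewriting
  have R1 : ∫ x, ⟪(wgt d c x)⁻¹ • gradient (fun z => u z * wgt d c z) x, G x⟫ * wgt d c x
      = ∑ i : Fin d, ∫ x, fderiv ℝ g x (EuclideanSpace.single i 1) * G x i := by
    rw [← integral_finset_sum _ (fun i _ => intB i)]
    congr 1 with x
    have hgrad : gradient (fun z => u z * wgt d c z) x = gradient g x := rfl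
    rw [hgrad, real_inner_smul_left, inner_gradient]
    have hdec : fderiv ℝ g x (G x)
        = ∑ i : Fin d, fderiv ℝ g x (EuclideanSpace.single i 1) * G x i := by
      have hGx : G x = ∑ i : Fin d, (G x i) • EuclideanSpace.single i 1 := by
        ext j
        rw [WithLp.ofLp_sum, Finset.sum_apply]
        simp [EuclideanSpace.single_apply, Finset.sum_ite_eq']
      conv_lhs => rw [hGx]
      rw [map_sum]
      refine Finset.sum_congr rfl fun i _ => ?_
      rw [ContinuousLinearMap.map_smul]
      simp [mul_comm]
    rw [hdec]
    rw [inv_mul_eq_div, div_mul_eq_mul_div, mul_div_assoc, div_self (hWne x), mul_one]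
  rw [L1, R1, ← Finset.sum_neg_distrib]
  refine Finset.sum_congr rfl fun i _ => ?_
  exact integral_mul_fderiv_eq_neg_fderiv_mul_of_integrable (intB i) (intA i) (intC i)
    (fun x _ => hgc.differentiable (by simp) x) (fun x _ => (hGi i).differentiable (by simp) x)
end

section
/- Let v : ℝᵈ → ℝ be smooth with compact support and w(x) = exp(‖x‖²/(2c)) with c > 0. Then ∫ ‖∇(v·w)(x)‖² · w(x)⁻¹ dx = ∫ (‖∇v(x)‖² − (d/c)·v(x)²) · w(x) dx. -/
open MeasureTheory RealInnerProductSpace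

/-- The integral of a directional derivative of a smooth compactly supported function vanishes. -/
lemma aux_int {d : ℕ} {g : EuclideanSpace ℝ (Fin d) → ℝ}
    (hg : ContDiff ℝ (⊤ : ℕ∞) g) (hgs : HasCompactSupport g) (u : EuclideanSpace ℝ (Fin d)) :
    ∫ x, fderiv ℝ g x u = 0 := by
  have hcont : Continuous fun x => fderiv ℝ g x u :=
    ((hg.fderiv_right (m := (⊤ : ℕ∞)) (by simp)).continuous).clm_apply continuous_const
  have h1 : Integrable (fun x => fderiv ℝ (fun _ : EuclideanSpace ℝ (Fin d) => (1:ℝ)) x u * g x)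
      (volume) := by
    simp only [fderiv_fun_const, Pi.zero_apply, ContinuousLinearMap.zero_apply, zero_mul]
    exact integrable_zero _ _ _
  have h2 : Integrable (fun x => (1:ℝ) * fderiv ℝ g x u) (volume) := by
    simp only [one_mul]
    exact hcont.integrable_of_hasCompactSupport (hgs.fderiv_apply ℝ u)
  have h3 : Integrable (fun x => (1:ℝ) * g x) (volume) := by
    simp only [one_mul]
    exact hg.continuous.integrable_of_hasCompactSupport hgs
  have key := integral_mul_fderiv_eq_neg_fderiv_mul_of_integrable h1 h2 h3
    (fun x _ => differentiableAt_const (1:ℝ)) (fun x _ => hg.differentiable (by simp) x)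
  simpa using key

theorem stmt_5 (d : ℕ) (hd : 1 ≤ d) (c : ℝ) (hc : 0 < c)
    (v : EuclideanSpace ℝ (Fin d) → ℝ) (hv : ContDiff ℝ (⊤ : ℕ∞) v) (hvs : HasCompactSupport v) :
    ∫ x, ‖gradient (fun z => v z * wgt d c z) x‖ ^ 2 * (wgt d c x)⁻¹
      = ∫ x, (‖gradient v x‖ ^ 2 - (d / c) * (v x) ^ 2) * wgt d c x := by
  have hwpos : ∀ x : EuclideanSpace ℝ (Fin d), 0 < wgt d c x := fun x => Real.exp_pos _
  have hwcd : ContDiff ℝ (⊤ : ℕ∞) (wgt d c) :=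
    Real.contDiff_exp.comp ((contDiff_norm_sq ℝ).div_const _)
  -- derivative of the weight
  have hDw : ∀ x, HasFDerivAt (wgt d c) ((wgt d c x / c) • (innerSL ℝ x)) x := by
    intro x
    have h1 : HasFDerivAt (fun y : EuclideanSpace ℝ (Fin d) => ‖y‖ ^ 2 / (2 * c))
        ((2*c)⁻¹ • (2 • (innerSL ℝ x))) x := by
      simpa [div_eq_inv_mul] using ((hasStrictFDerivAt_norm_sq x).hasFDerivAt).const_mul (2*c)⁻¹
    have h2 := h1.exp
    refine (h2 : HasFDerivAt (wgt d c) _ x).congr_fderiv ?_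
    ext y
    have : Real.exp (‖x‖ ^ 2 / (2 * c)) = wgt d c x := rfl
    simp only [ContinuousLinearMap.coe_smul', Pi.smul_apply, smul_eq_mul, innerSL_apply_apply,
      ContinuousLinearMap.smul_apply, this]
    field_simp
    ring
  have hv' : ∀ y, HasFDerivAt v (fderiv ℝ v y) y :=
    fun y => (hv.differentiable (by simp) y).hasFDerivAt
  have hfdv : ∀ z y, fderiv ℝ v z y = ⟪gradient v z, y⟫ := by
    intro z y
    rw [(hv.differentiable (by simp) z).hasGradientAt.hasFDerivAt.fderiv]
    simp [InnerProductSpace.toDual_apply_apply]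
  -- gradient of the product
  have hgr : ∀ x, HasGradientAt (fun z => v z * wgt d c z)
      (wgt d c x • gradient v x + (v x * wgt d c x / c) • x) x := by
    intro x
    rw [hasGradientAt_iff_hasFDerivAt]
    have hm := ((hv.differentiable (by simp) x).hasGradientAt.hasFDerivAt).fun_mul (hDw x)
    refine hm.congr_fderiv ?_
    ext y
    simp only [map_add, _root_.map_smul, ContinuousLinearMap.add_apply,
      ContinuousLinearMap.coe_smul', Pi.smul_apply, smul_eq_mul,
      InnerProductSpace.toDual_apply_apply, innerSL_apply_apply, ContinuousLinearMap.smul_apply]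
    ring
  have hnorm : ∀ x, ‖gradient (fun z => v z * wgt d c z) x‖ ^ 2
      = (wgt d c x) ^ 2 * ‖gradient v x‖ ^ 2
        + 2 * (wgt d c x * (v x * wgt d c x / c)) * ⟪gradient v x, x⟫
        + (v x * wgt d c x / c) ^ 2 * ‖x‖ ^ 2 := by
    intro x
    rw [(hgr x).gradient, norm_add_sq_real, norm_smul, norm_smul,
      real_inner_smul_left, real_inner_smul_right]
    have h1 : ‖wgt d c x‖ = wgt d c x := abs_of_pos (hwpos x)
    rw [h1, mul_pow, mul_pow]
    have h2 : ‖v x * wgt d c x / c‖ ^ 2 = (v x * wgt d c x / c) ^ 2 := sq_abs _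
    rw [h2]
    ring
  -- the divergence term
  have hsum : ∀ x, ∑ i, fderiv ℝ (fun y => (v y * (c⁻¹ * (v y * wgt d c y))) * y i) x
        (EuclideanSpace.single i 1)
      = (d : ℝ) * (v x * (c⁻¹ * (v x * wgt d c x)))
        + (v x ^ 2 * wgt d c x / c ^ 2) * ‖x‖ ^ 2
        + (2 * v x * wgt d c x / c) * ⟪gradient v x, x⟫ := by
    intro x
    have hDu : HasFDerivAt (fun y => v y * (c⁻¹ * (v y * wgt d c y)))
        (v x • (c⁻¹ • (v x • ((wgt d c x / c) • (innerSL ℝ x)) + wgt d c x • fderiv ℝ v x))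
          + (c⁻¹ * (v x * wgt d c x)) • fderiv ℝ v x) x :=
      (hv' x).mul (((hv' x).mul (hDw x)).const_mul c⁻¹)
    have hterm : ∀ i, fderiv ℝ (fun y => (v y * (c⁻¹ * (v y * wgt d c y))) * y i) x
        (EuclideanSpace.single i 1)
        = (v x * (c⁻¹ * (v x * wgt d c x)))
          + x i * ((v x * (c⁻¹ * (v x * (wgt d c x / c * x i) + wgt d c x * gradient v x i)))
            + (c⁻¹ * (v x * wgt d c x)) * gradient v x i) := by
      intro i
      have hproj : HasFDerivAt (fun y : EuclideanSpace ℝ (Fin d) => y i)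
          (EuclideanSpace.proj (𝕜 := ℝ) i) x := (EuclideanSpace.proj (𝕜 := ℝ) i).hasFDerivAt
      have hgi := hDu.fun_mul hproj
      rw [hgi.fderiv]
      have e1 : (EuclideanSpace.proj (𝕜 := ℝ) i) (EuclideanSpace.single i 1) = 1 := by
        simp
      have e2 : (innerSL ℝ x) (EuclideanSpace.single i 1) = x i := by
        simp [EuclideanSpace.inner_single_right]
      simp only [ContinuousLinearMap.add_apply, ContinuousLinearMap.coe_smul', Pi.smul_apply,
        smul_eq_mul, e1, e2, hfdv, mul_one]
      rw [show (inner ℝ (gradient v x) (EuclideanSpace.single i 1) : ℝ) = gradient v x i by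
        rw [EuclideanSpace.inner_single_right]; simp]
      try ring
    rw [Finset.sum_congr rfl (fun i _ => hterm i)]
    rw [Finset.sum_add_distrib, Finset.sum_const, Finset.card_univ, Fintype.card_fin]
    have hx2 : ∑ i, x i * x i = ‖x‖ ^ 2 := by
      rw [← real_inner_self_eq_norm_sq]
      rw [PiLp.inner_apply]; simp only [RCLike.inner_apply, conj_trivial]
    have hgx : ∑ i, gradient v x i * x i = ⟪gradient v x, x⟫ := by
      rw [PiLp.inner_apply]; simp [mul_comm]
    rw [Finset.sum_congr rfl (fun i (_ : i ∈ Finset.univ) =>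
      (show x i * ((v x * (c⁻¹ * (v x * (wgt d c x / c * x i) + wgt d c x * gradient v x i)))
          + (c⁻¹ * (v x * wgt d c x)) * gradient v x i)
        = (v x ^ 2 * wgt d c x / c ^ 2) * (x i * x i)
          + (2 * v x * wgt d c x / c) * (gradient v x i * x i) by ring))]
    rw [Finset.sum_add_distrib, ← Finset.mul_sum, ← Finset.mul_sum, hx2, hgx, nsmul_eq_mul]
    ring
  -- pointwise identity
  have hpt : ∀ x, ‖gradient (fun z => v z * wgt d c z) x‖ ^ 2 * (wgt d c x)⁻¹
      = (‖gradient v x‖ ^ 2 - (d / c) * (v x) ^ 2) * wgt d c x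
        + ∑ i, fderiv ℝ (fun y => (v y * (c⁻¹ * (v y * wgt d c y))) * y i) x
            (EuclideanSpace.single i 1) := by
    intro x
    rw [hnorm x, hsum x]
    have hw0 : wgt d c x ≠ 0 := (hwpos x).ne'
    field_simp
    ring
  -- regularity of the auxiliary functions
  have hgcs : ∀ i : Fin d, HasCompactSupport
      (fun y => (v y * (c⁻¹ * (v y * wgt d c y))) * y i) := by
    intro i
    apply hvs.mono'
    intro x hx
    by_contra h
    exact hx (by simp [image_eq_zero_of_notMem_tsupport h])
  have hgcd : ∀ i : Fin d, ContDiff ℝ (⊤ : ℕ∞)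
      (fun y : EuclideanSpace ℝ (Fin d) => (v y * (c⁻¹ * (v y * wgt d c y))) * y i) := by
    intro i
    exact (hv.mul (contDiff_const.mul (hv.mul hwcd))).mul (EuclideanSpace.proj (𝕜 := ℝ) i).contDiff
  -- continuity and compact support of the gradient of v
  have hgrv_eq : gradient v = fun x =>
      (InnerProductSpace.toDual ℝ (EuclideanSpace ℝ (Fin d))).symm (fderiv ℝ v x) := rfl
  have hgrcont : Continuous (gradient v) := by
    rw [hgrv_eq]
    exact (InnerProductSpace.toDual ℝ _).symm.continuous.comp
      (hv.fderiv_right (m := (⊤ : ℕ∞)) (by simp)).continuous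
  have hB_cont : Continuous (fun x => (‖gradient v x‖ ^ 2 - (d / c) * (v x) ^ 2) * wgt d c x) :=
    (((hgrcont.norm).pow 2).sub (continuous_const.mul (hv.continuous.pow 2))).mul hwcd.continuous
  have hB_cs : HasCompactSupport
      (fun x => (‖gradient v x‖ ^ 2 - (d / c) * (v x) ^ 2) * wgt d c x) := by
    apply hvs.mono'
    intro x hx
    by_contra h
    have hv0 : v x = 0 := image_eq_zero_of_notMem_tsupport h
    have hf0 : fderiv ℝ v x = 0 := by
      by_contra h'
      exact h (support_fderiv_subset ℝ h')
    have hg0 : gradient v x = 0 := by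
      rw [hgrv_eq]
      simp [hf0]
    exact hx (by simp [hv0, hg0])
  have hB_int : Integrable (fun x => (‖gradient v x‖ ^ 2 - (d / c) * (v x) ^ 2) * wgt d c x)
      (volume) := hB_cont.integrable_of_hasCompactSupport hB_cs
  have hD_int : ∀ i : Fin d, Integrable
      (fun x => fderiv ℝ (fun y => (v y * (c⁻¹ * (v y * wgt d c y))) * y i) x
        (EuclideanSpace.single i 1)) (volume) := by
    intro i
    exact ((((hgcd i).fderiv_right (m := (⊤ : ℕ∞)) (by simp)).continuous).clm_apply
      continuous_const).integrable_of_hasCompactSupport ((hgcs i).fderiv_apply ℝ _)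
  calc ∫ x, ‖gradient (fun z => v z * wgt d c z) x‖ ^ 2 * (wgt d c x)⁻¹
      = ∫ x, ((‖gradient v x‖ ^ 2 - (d / c) * (v x) ^ 2) * wgt d c x
          + ∑ i, fderiv ℝ (fun y => (v y * (c⁻¹ * (v y * wgt d c y))) * y i) x
              (EuclideanSpace.single i 1)) :=
        integral_congr_ae (Filter.Eventually.of_forall hpt)
    _ = (∫ x, (‖gradient v x‖ ^ 2 - (d / c) * (v x) ^ 2) * wgt d c x)
          + ∫ x, ∑ i, fderiv ℝ (fun y => (v y * (c⁻¹ * (v y * wgt d c y))) * y i) x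
              (EuclideanSpace.single i 1) :=
        integral_add hB_int (integrable_finset_sum _ (fun i _ => hD_int i))
    _ = ∫ x, (‖gradient v x‖ ^ 2 - (d / c) * (v x) ^ 2) * wgt d c x := by
        rw [integral_finset_sum _ (fun i _ => hD_int i)]
        rw [Finset.sum_congr rfl (fun i (_ : i ∈ Finset.univ) =>
          aux_int (hgcd i) (hgcs i) (EuclideanSpace.single i 1))]
        simp
end

section
/- Let v₁, v₂ : ℝᵈ → ℝ be smooth with compact support, w(x) = exp(‖x‖²/(2c)) with c > 0, and let f, g : [0,T] → ℝ be continuous positive with f(t) ≥ g(t)²/(2c) for all t. Define A(t,v) = f(t)·∇·(x v) + (g(t)²/2)·Δv and K = d·max_{t∈[0,T]} f(t). Then 2·∫ (v₁ − v₂)(x)·(A(t,v₁) − A(t,v₂))(x)·w(x) dx ≤ K·∫ (v₁(x) − v₂(x))²·w(x) dx for all t ∈ [0,T] (weak monotonicity of A). -/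
open MeasureTheory RealInnerProductSpace

section aux
variable {d : ℕ} {c : ℝ}

lemma hasFDerivAt_wgt (hc : 0 < c) (x : EuclideanSpace ℝ (Fin d)) :
    HasFDerivAt (wgt d c) ((wgt d c x / c) • innerSL ℝ x) x := by
  have h0 := (hasFDerivAt_id x).inner ℝ (hasFDerivAt_id x)
  have h := h0.const_mul ((2*c)⁻¹)
  have he : (fun y : EuclideanSpace ℝ (Fin d) => ‖y‖ ^ 2 / (2 * c))
      = fun y : EuclideanSpace ℝ (Fin d) => (2*c)⁻¹ * ⟪y, y⟫ := by
    funext y; rw [real_inner_self_eq_norm_sq]; ring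
  have h1 : HasFDerivAt (fun y : EuclideanSpace ℝ (Fin d) => ‖y‖ ^ 2 / (2 * c))
      ((c⁻¹ : ℝ) • innerSL ℝ x) x := by
    rw [he]
    refine h.congr_fderiv ?_
    ext v
    simp only [ContinuousLinearMap.smul_apply, ContinuousLinearMap.coe_comp',
      Function.comp_apply, ContinuousLinearMap.prod_apply, ContinuousLinearMap.coe_id', id,
      fderivInnerCLM_apply, innerSL_apply_apply, smul_eq_mul]
    rw [real_inner_comm v x]
    field_simp
    ring
  have h2 := (Real.hasDerivAt_exp (‖x‖ ^ 2 / (2 * c))).comp_hasFDerivAt x h1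
  refine h2.congr_fderiv ?_
  ext v
  simp only [ContinuousLinearMap.smul_apply, innerSL_apply_apply, smul_eq_mul, wgt]
  ring

lemma fderiv_wgt_single (hc : 0 < c) (x : EuclideanSpace ℝ (Fin d)) (i : Fin d) :
    fderiv ℝ (wgt d c) x (EuclideanSpace.single i 1) = c⁻¹ * (wgt d c x * x i) := by
  rw [(hasFDerivAt_wgt hc x).fderiv]
  simp only [ContinuousLinearMap.smul_apply, innerSL_apply_apply, smul_eq_mul]
  rw [show ⟪x, EuclideanSpace.single i 1⟫ = 1 * x i from EuclideanSpace.inner_single_right i 1 x]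
  ring

lemma contDiff_pderiv {u : EuclideanSpace ℝ (Fin d) → ℝ} (hu : ContDiff ℝ (⊤ : ℕ∞) u)
    (v : EuclideanSpace ℝ (Fin d)) :
    ContDiff ℝ (⊤ : ℕ∞) (fun y => fderiv ℝ u y v) := by
  have h1 : ContDiff ℝ (⊤ : ℕ∞) (⇑(ContinuousLinearMap.apply ℝ ℝ v) ∘ (fderiv ℝ u)) :=
    (ContinuousLinearMap.apply ℝ ℝ v).contDiff.comp (hu.fderiv_right (by simp))
  exact h1

lemma key_ineq (d : ℕ) (c : ℝ) (hc : 0 < c) (u : EuclideanSpace ℝ (Fin d) → ℝ)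
    (hu : ContDiff ℝ (⊤ : ℕ∞) u) (hus : HasCompactSupport u) (F Gt M : ℝ)
    (hF : 0 ≤ F - Gt ^ 2 / (2 * c)) (hFM : F ≤ M) :
    2 * ∫ x, u x * (F * (d * u x + fderiv ℝ u x x)
        + Gt ^ 2 / 2 * (∑ i, fderiv ℝ (fun y => fderiv ℝ u y (EuclideanSpace.single i 1)) x
            (EuclideanSpace.single i 1))) * wgt d c x
      ≤ ((d : ℝ) * M) * ∫ x, u x * (u x * wgt d c x) := by
  set w : EuclideanSpace ℝ (Fin d) → ℝ := wgt d c with hw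
  have hwD : ∀ x, HasFDerivAt w ((w x / c) • innerSL ℝ x) x := fun x => hasFDerivAt_wgt hc x
  have hwdiff : Differentiable ℝ w := fun x => (hwD x).differentiableAt
  have hwcont : Continuous w := hwdiff.continuous
  have hwpos : ∀ x, 0 < w x := fun x => Real.exp_pos _
  have hud : Differentiable ℝ u := hu.differentiable (by simp)
  have hucont : Continuous u := hud.continuous
  have hduC : ∀ i : Fin d, ContDiff ℝ (⊤ : ℕ∞) (fun y => fderiv ℝ u y (EuclideanSpace.single i 1)) :=
    fun i => contDiff_pderiv hu _
  have hduD : ∀ i : Fin d, Differentiable ℝ (fun y => fderiv ℝ u y (EuclideanSpace.single i 1)) :=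
    fun i => (hduC i).differentiable (by simp)
  have hducont : ∀ i : Fin d, Continuous (fun y => fderiv ℝ u y (EuclideanSpace.single i 1)) :=
    fun i => (hduC i).continuous
  have hdus : ∀ i : Fin d, HasCompactSupport (fun y => fderiv ℝ u y (EuclideanSpace.single i 1)) :=
    fun i => hus.fderiv_apply ℝ (EuclideanSpace.single i 1)
  have hd2cont : ∀ i : Fin d, Continuous
      (fun y => fderiv ℝ (fun z => fderiv ℝ u z (EuclideanSpace.single i 1)) y
        (EuclideanSpace.single i 1)) :=
    fun i => (contDiff_pderiv (hduC i) _).continuous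
  have hcoordcont : ∀ i : Fin d, Continuous (fun x : EuclideanSpace ℝ (Fin d) => x i) :=
    fun i => (EuclideanSpace.proj (𝕜 := ℝ) i).continuous
  have intCS : ∀ {φ ψ : EuclideanSpace ℝ (Fin d) → ℝ}, HasCompactSupport φ → Continuous φ →
      Continuous ψ → Integrable (fun x => φ x * ψ x) volume := by
    intro φ ψ h1 h2 h3
    exact (h2.mul h3).integrable_of_hasCompactSupport (h1.mul_right)
  set S : ℝ := ∫ x, u x * (u x * w x) with hS
  set I : Fin d → ℝ := fun i =>
    ∫ x, u x * (x i * (fderiv ℝ u x (EuclideanSpace.single i 1) * w x)) with hI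
  set P : Fin d → ℝ := fun i => ∫ x, u x * (u x * (x i * (x i * w x))) with hP
  set G : Fin d → ℝ := fun i => ∫ x, fderiv ℝ u x (EuclideanSpace.single i 1) *
      (fderiv ℝ u x (EuclideanSpace.single i 1) * w x) with hG
  set B : Fin d → ℝ := fun i => ∫ x, u x *
      (fderiv ℝ (fun z => fderiv ℝ u z (EuclideanSpace.single i 1)) x (EuclideanSpace.single i 1)
        * w x) with hB
  have intS : Integrable (fun x => u x * (u x * w x)) volume :=
    intCS hus hucont (hucont.mul hwcont)
  have intI : ∀ i : Fin d, Integrable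
      (fun x => u x * (x i * (fderiv ℝ u x (EuclideanSpace.single i 1) * w x))) volume :=
    fun i => intCS hus hucont ((hcoordcont i).mul ((hducont i).mul hwcont))
  have intP : ∀ i : Fin d, Integrable (fun x => u x * (u x * (x i * (x i * w x)))) volume :=
    fun i => intCS hus hucont (hucont.mul ((hcoordcont i).mul ((hcoordcont i).mul hwcont)))
  have intG : ∀ i : Fin d, Integrable (fun x => fderiv ℝ u x (EuclideanSpace.single i 1) *
      (fderiv ℝ u x (EuclideanSpace.single i 1) * w x)) volume :=
    fun i => intCS (hdus i) (hducont i) ((hducont i).mul hwcont)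
  have intB : ∀ i : Fin d, Integrable (fun x => u x *
      (fderiv ℝ (fun z => fderiv ℝ u z (EuclideanSpace.single i 1)) x (EuclideanSpace.single i 1)
        * w x)) volume :=
    fun i => intCS hus hucont ((hd2cont i).mul hwcont)
  have hfduw : ∀ (x : EuclideanSpace ℝ (Fin d)) (i : Fin d),
      fderiv ℝ (fun y => u y * w y) x (EuclideanSpace.single i 1)
        = fderiv ℝ u x (EuclideanSpace.single i 1) * w x + u x * (c⁻¹ * (w x * x i)) := by
    intro x i
    rw [fderiv_fun_mul (hud x) (hwdiff x)]
    simp only [ContinuousLinearMap.add_apply, ContinuousLinearMap.smul_apply, smul_eq_mul]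
    rw [hw, fderiv_wgt_single hc x i, ← hw]
    ring
  -- nonnegativity
  have hSnn : 0 ≤ S := integral_nonneg fun x => by
    simp only [Pi.zero_apply]
    nlinarith [mul_nonneg (mul_self_nonneg (u x)) (hwpos x).le]
  have hPnn : ∀ i, 0 ≤ P i := fun i => integral_nonneg fun x => by
    simp only [Pi.zero_apply]
    nlinarith [mul_nonneg (mul_nonneg (mul_self_nonneg (u x)) (mul_self_nonneg (x i))) (hwpos x).le]
  have hGnn : ∀ i, 0 ≤ G i := fun i => integral_nonneg fun x => by
    simp only [Pi.zero_apply]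
    nlinarith [mul_nonneg (mul_self_nonneg (fderiv ℝ u x (EuclideanSpace.single i 1))) (hwpos x).le]
  -- IBP identity A
  have ibpA : ∀ i : Fin d, c * S = -(2 * c * I i + P i) := by
    intro i
    have hfd : Differentiable ℝ (fun y => u y * (u y * w y)) := hud.mul (hud.mul hwdiff)
    have hgd : Differentiable ℝ (fun y : EuclideanSpace ℝ (Fin d) => y i) :=
      (EuclideanSpace.proj (𝕜 := ℝ) i).differentiable
    have hgfd : ∀ x : EuclideanSpace ℝ (Fin d),
        fderiv ℝ (fun y : EuclideanSpace ℝ (Fin d) => y i) x (EuclideanSpace.single i 1) = 1 := by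
      intro x
      rw [show (fun y : EuclideanSpace ℝ (Fin d) => y i)
          = ⇑(EuclideanSpace.proj (𝕜 := ℝ) i) from rfl, ContinuousLinearMap.fderiv]
      simp
    have hffd : ∀ x : EuclideanSpace ℝ (Fin d),
        fderiv ℝ (fun y => u y * (u y * w y)) x (EuclideanSpace.single i 1)
          = fderiv ℝ u x (EuclideanSpace.single i 1) * (u x * w x)
            + u x * (fderiv ℝ u x (EuclideanSpace.single i 1) * w x + u x * (c⁻¹ * (w x * x i))) := by
      intro x
      rw [fderiv_fun_mul (d := fun y => u y * w y) (hud x) ((hud x).mul (hwdiff x))]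
      simp only [ContinuousLinearMap.add_apply, ContinuousLinearMap.smul_apply, smul_eq_mul]
      rw [hfduw x i]
      ring
    have hint1 : Integrable (fun x => fderiv ℝ (fun y => u y * (u y * w y)) x
        (EuclideanSpace.single i 1) * x i) volume := by
      have eA : (fun x => fderiv ℝ (fun y => u y * (u y * w y)) x (EuclideanSpace.single i 1) * x i)
          = fun x => 2 * (u x * (x i * (fderiv ℝ u x (EuclideanSpace.single i 1) * w x)))
            + c⁻¹ * (u x * (u x * (x i * (x i * w x)))) := by
        funext x; rw [hffd x]; ring
      rw [eA]
      exact ((intI i).const_mul 2).add ((intP i).const_mul c⁻¹)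
    have hint2 : Integrable (fun x => (u x * (u x * w x)) *
        fderiv ℝ (fun y : EuclideanSpace ℝ (Fin d) => y i) x (EuclideanSpace.single i 1)) volume := by
      have eB : (fun x => (u x * (u x * w x)) *
          fderiv ℝ (fun y : EuclideanSpace ℝ (Fin d) => y i) x (EuclideanSpace.single i 1))
          = fun x => u x * (u x * w x) := by
        funext x; rw [hgfd x]; ring
      rw [eB]; exact intS
    have hint3 : Integrable (fun x => (u x * (u x * w x)) * x i) volume := by
      have eC : (fun x => (u x * (u x * w x)) * x i)
          = fun x => u x * ((u x * w x) * x i) := by funext x; ring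
      rw [eC]; exact intCS hus hucont ((hucont.mul hwcont).mul (hcoordcont i))
    have cA : S = -(2 * I i + c⁻¹ * P i) := by
      calc S = ∫ x, (u x * (u x * w x)) *
            fderiv ℝ (fun y : EuclideanSpace ℝ (Fin d) => y i) x (EuclideanSpace.single i 1) := by
            rw [hS]
            exact integral_congr_ae (Filter.Eventually.of_forall fun x => by simp only [hgfd]; ring)
        _ = - ∫ x, fderiv ℝ (fun y => u y * (u y * w y)) x (EuclideanSpace.single i 1) * x i :=
            integral_mul_fderiv_eq_neg_fderiv_mul_of_integrable hint1 hint2 hint3 (fun x _ => hfd x) (fun x _ => hgd x)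
        _ = - ∫ x, (2 * (u x * (x i * (fderiv ℝ u x (EuclideanSpace.single i 1) * w x)))
              + c⁻¹ * (u x * (u x * (x i * (x i * w x))))) := by
            congr 1
            exact integral_congr_ae (Filter.Eventually.of_forall fun x => by simp only [hffd]; ring)
        _ = -(2 * I i + c⁻¹ * P i) := by
            rw [integral_add ((intI i).const_mul 2) ((intP i).const_mul c⁻¹),
              integral_const_mul, integral_const_mul]
    rw [cA]; field_simp
  -- IBP identity B
  have ibpB : ∀ i : Fin d, c * B i = -(c * G i + I i) := by
    intro i
    have hfd : Differentiable ℝ (fun y => u y * w y) := hud.mul hwdiff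
    have hint1 : Integrable (fun x => fderiv ℝ (fun y => u y * w y) x (EuclideanSpace.single i 1) *
        fderiv ℝ u x (EuclideanSpace.single i 1)) volume := by
      have eA : (fun x => fderiv ℝ (fun y => u y * w y) x (EuclideanSpace.single i 1) *
          fderiv ℝ u x (EuclideanSpace.single i 1))
          = fun x => fderiv ℝ u x (EuclideanSpace.single i 1) *
              (fderiv ℝ u x (EuclideanSpace.single i 1) * w x)
            + c⁻¹ * (u x * (x i * (fderiv ℝ u x (EuclideanSpace.single i 1) * w x))) := by
        funext x; rw [hfduw x i]; ring
      rw [eA]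
      exact (intG i).add ((intI i).const_mul c⁻¹)
    have hint2 : Integrable (fun x => (u x * w x) *
        fderiv ℝ (fun y => fderiv ℝ u y (EuclideanSpace.single i 1)) x
          (EuclideanSpace.single i 1)) volume := by
      have eB : (fun x => (u x * w x) *
          fderiv ℝ (fun y => fderiv ℝ u y (EuclideanSpace.single i 1)) x (EuclideanSpace.single i 1))
          = fun x => u x * (fderiv ℝ (fun z => fderiv ℝ u z (EuclideanSpace.single i 1)) x
              (EuclideanSpace.single i 1) * w x) := by
        funext x; ring
      rw [eB]; exact intB i
    have hint3 : Integrable (fun x => (u x * w x) * fderiv ℝ u x (EuclideanSpace.single i 1))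
        volume := by
      have eC : (fun x => (u x * w x) * fderiv ℝ u x (EuclideanSpace.single i 1))
          = fun x => u x * (w x * fderiv ℝ u x (EuclideanSpace.single i 1)) := by funext x; ring
      rw [eC]; exact intCS hus hucont (hwcont.mul (hducont i))
    have cB : B i = -(G i + c⁻¹ * I i) := by
      calc B i = ∫ x, (u x * w x) *
            fderiv ℝ (fun y => fderiv ℝ u y (EuclideanSpace.single i 1)) x
              (EuclideanSpace.single i 1) := by
            simp only [hB]
            exact integral_congr_ae (Filter.Eventually.of_forall fun x => by ring)
        _ = - ∫ x, fderiv ℝ (fun y => u y * w y) x (EuclideanSpace.single i 1) *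
              fderiv ℝ u x (EuclideanSpace.single i 1) :=
            integral_mul_fderiv_eq_neg_fderiv_mul_of_integrable hint1 hint2 hint3 (fun x _ => hfd x) (fun x _ => hduD i x)
        _ = - ∫ x, (fderiv ℝ u x (EuclideanSpace.single i 1) *
                (fderiv ℝ u x (EuclideanSpace.single i 1) * w x)
              + c⁻¹ * (u x * (x i * (fderiv ℝ u x (EuclideanSpace.single i 1) * w x)))) := by
            congr 1
            exact integral_congr_ae (Filter.Eventually.of_forall fun x => by simp only [hfduw]; ring)
        _ = -(G i + c⁻¹ * I i) := by
            rw [integral_add (intG i) ((intI i).const_mul c⁻¹), integral_const_mul]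
    rw [cB]; field_simp
  -- pointwise Cauchy-Schwarz/AM-GM inequality
  have ineqC : ∀ i : Fin d, -(2 * c * I i) ≤ P i + c ^ 2 * G i := by
    intro i
    have lhs_eq : -(2 * c * I i) = ∫ x, (-(2 * c)) *
        (u x * (x i * (fderiv ℝ u x (EuclideanSpace.single i 1) * w x))) := by
      rw [integral_const_mul]; simp only [hI]; ring
    have rhs_eq : P i + c ^ 2 * G i = ∫ x, (u x * (u x * (x i * (x i * w x)))
        + c ^ 2 * (fderiv ℝ u x (EuclideanSpace.single i 1) *
            (fderiv ℝ u x (EuclideanSpace.single i 1) * w x))) := by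
      rw [integral_add (intP i) ((intG i).const_mul _), integral_const_mul]
    rw [lhs_eq, rhs_eq]
    refine integral_mono ((intI i).const_mul _) ((intP i).add ((intG i).const_mul _)) fun x => ?_
    nlinarith [mul_nonneg (hwpos x).le
      (sq_nonneg (u x * x i + c * fderiv ℝ u x (EuclideanSpace.single i 1)))]
  -- expansion of fderiv u x x in coordinates
  have hxsum : ∀ x : EuclideanSpace ℝ (Fin d),
      fderiv ℝ u x x = ∑ i, x i * fderiv ℝ u x (EuclideanSpace.single i 1) := by
    intro x
    have hxd : (∑ i, x i • EuclideanSpace.single i (1:ℝ)) = x := by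
      simpa [EuclideanSpace.basisFun_repr, EuclideanSpace.basisFun_apply] using
        (EuclideanSpace.basisFun (Fin d) ℝ).sum_repr x
    have h1 : fderiv ℝ u x (∑ i, x i • EuclideanSpace.single i (1:ℝ)) = fderiv ℝ u x x :=
      congrArg _ hxd
    rw [← h1, map_sum]
    exact Finset.sum_congr rfl fun i _ => by
      rw [ContinuousLinearMap.map_smul, smul_eq_mul]
  -- split the main integral
  have hsplit : (fun x => u x * (F * (↑d * u x + fderiv ℝ u x x)
      + Gt ^ 2 / 2 * (∑ i, fderiv ℝ (fun y => fderiv ℝ u y (EuclideanSpace.single i 1)) x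
          (EuclideanSpace.single i 1))) * w x)
      = fun x => (F * ↑d) * (u x * (u x * w x))
        + ((∑ i, F * (u x * (x i * (fderiv ℝ u x (EuclideanSpace.single i 1) * w x))))
          + (∑ i, (Gt ^ 2 / 2) * (u x *
              (fderiv ℝ (fun y => fderiv ℝ u y (EuclideanSpace.single i 1)) x
                (EuclideanSpace.single i 1) * w x)))) := by
    funext x
    rw [hxsum x]
    have m1 : (∑ i, F * (u x * (x i * (fderiv ℝ u x (EuclideanSpace.single i 1) * w x))))
        = (u x * w x * F) * ∑ i, x i * fderiv ℝ u x (EuclideanSpace.single i 1) := by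
      rw [Finset.mul_sum]; exact Finset.sum_congr rfl fun i _ => by ring
    have m2 : (∑ i, (Gt ^ 2 / 2) * (u x *
          (fderiv ℝ (fun y => fderiv ℝ u y (EuclideanSpace.single i 1)) x
            (EuclideanSpace.single i 1) * w x)))
        = (u x * w x * (Gt ^ 2 / 2)) * ∑ i, fderiv ℝ
            (fun y => fderiv ℝ u y (EuclideanSpace.single i 1)) x (EuclideanSpace.single i 1) := by
      rw [Finset.mul_sum]; exact Finset.sum_congr rfl fun i _ => by ring
    rw [m1, m2]
    ring
  rw [hsplit]
  have hg1 : Integrable (fun x => (∑ i, F * (u x * (x i *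
      (fderiv ℝ u x (EuclideanSpace.single i 1) * w x))))) volume :=
    integrable_finset_sum Finset.univ fun i _ => (intI i).const_mul F
  have hg2 : Integrable (fun x => (∑ i, (Gt ^ 2 / 2) * (u x *
      (fderiv ℝ (fun y => fderiv ℝ u y (EuclideanSpace.single i 1)) x
        (EuclideanSpace.single i 1) * w x)))) volume :=
    integrable_finset_sum Finset.univ fun i _ => (intB i).const_mul (Gt ^ 2 / 2)
  have hg12 : Integrable (fun x => (∑ i, F * (u x * (x i *
      (fderiv ℝ u x (EuclideanSpace.single i 1) * w x))))
      + (∑ i, (Gt ^ 2 / 2) * (u x *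
        (fderiv ℝ (fun y => fderiv ℝ u y (EuclideanSpace.single i 1)) x
          (EuclideanSpace.single i 1) * w x)))) volume := hg1.add hg2
  rw [integral_add (intS.const_mul (F * ↑d)) hg12]
  rw [integral_add hg1 hg2]
  rw [integral_finset_sum Finset.univ (fun i _ => (intI i).const_mul F)]
  rw [integral_finset_sum Finset.univ (fun i _ => (intB i).const_mul (Gt ^ 2 / 2))]
  rw [integral_const_mul]
  simp only [integral_const_mul]
  rw [← Finset.mul_sum, ← Finset.mul_sum]
  -- aggregate quantities
  set SI : ℝ := ∑ i, I i with hSI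
  set SP : ℝ := ∑ i, P i with hSP
  set SG : ℝ := ∑ i, G i with hSG
  set SB : ℝ := ∑ i, B i with hSB
  have hA : c * (↑d * S) = -(2 * c * SI + SP) := by
    have h1 : (∑ _i : Fin d, (c * S)) = ↑d * (c * S) := by
      rw [Finset.sum_const, Finset.card_univ, Fintype.card_fin, nsmul_eq_mul]
    have h2 : (∑ _i : Fin d, (c * S)) = ∑ i, -(2 * c * I i + P i) :=
      Finset.sum_congr rfl fun i _ => ibpA i
    have h3 : (∑ i, -(2 * c * I i + P i)) = -(2 * c * SI + SP) := by
      rw [hSI, hSP, Finset.mul_sum, ← Finset.sum_add_distrib, ← Finset.sum_neg_distrib]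
    rw [← h3, ← h2, h1]; ring
  have hBagg : c * SB = -(c * SG + SI) := by
    have h2 : (∑ i, c * B i) = ∑ i, -(c * G i + I i) :=
      Finset.sum_congr rfl fun i _ => ibpB i
    have h3 : (∑ i, -(c * G i + I i)) = -(c * SG + SI) := by
      rw [hSG, hSI, Finset.mul_sum, ← Finset.sum_add_distrib, ← Finset.sum_neg_distrib]
    rw [← h3, ← h2, hSB, Finset.mul_sum]
  have hS_le : ∀ i, S ≤ c * G i := by
    intro i
    have h' : c * S ≤ c * (c * G i) := by nlinarith [ibpA i, ineqC i, hPnn i]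
    exact le_of_mul_le_mul_left h' hc
  have hdS : ↑d * S ≤ c * SG := by
    have h1 : (∑ _i : Fin d, S) ≤ ∑ i, c * G i := Finset.sum_le_sum fun i _ => hS_le i
    rw [Finset.sum_const, Finset.card_univ, Fintype.card_fin, nsmul_eq_mul, ← Finset.mul_sum]
      at h1
    rw [hSG]; exact h1
  have hSPnn : 0 ≤ SP := Finset.sum_nonneg fun i _ => hPnn i
  have hSGnn : 0 ≤ SG := Finset.sum_nonneg fun i _ => hGnn i
  have f7 : Gt ^ 2 ≤ F * (2 * c) := by
    have h' : Gt ^ 2 / (2 * c) ≤ F := by linarith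
    exact (div_le_iff₀ (by positivity)).mp h'
  -- final linear arithmetic
  refine le_of_mul_le_mul_left ?_ (show (0:ℝ) < c ^ 2 by positivity)
  have g1' : c * F * (c * (↑d * S)) = -(2 * c ^ 2 * F * SI + c * F * SP) := by
    linear_combination (c * F) * hA
  have g2' : c ^ 2 * Gt ^ 2 * SB = -(c ^ 2 * Gt ^ 2 * SG + c * Gt ^ 2 * SI) := by
    linear_combination (c * Gt ^ 2) * hBagg
  have g3' : (Gt ^ 2 / 2) * (c * (↑d * S)) = -(c * Gt ^ 2 * SI + (Gt ^ 2 / 2) * SP) := by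
    linear_combination (Gt ^ 2 / 2) * hA
  have e3 : c * Gt ^ 2 * (↑d * S) ≤ c * Gt ^ 2 * (c * SG) :=
    mul_le_mul_of_nonneg_left hdS (by positivity)
  have e7 : 0 ≤ (F * (2 * c) - Gt ^ 2) * SP := mul_nonneg (by linarith) hSPnn
  have e6 : 0 ≤ c ^ 2 * Gt ^ 2 * SG := mul_nonneg (by positivity) hSGnn
  have e8 : c ^ 2 * F * (↑d * S) ≤ c ^ 2 * M * (↑d * S) := by
    have hds0 : 0 ≤ (d : ℝ) * S := mul_nonneg (Nat.cast_nonneg d) hSnn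
    have h1 := mul_le_mul_of_nonneg_right hFM hds0
    have h2 := mul_le_mul_of_nonneg_left h1 (show (0:ℝ) ≤ c ^ 2 by positivity)
    linarith
  linarith [g1', g2', g3', e3, e7, e6, e8]

end aux

lemma inner_gradient_eq {d : ℕ} (f : EuclideanSpace ℝ (Fin d) → ℝ) (x : EuclideanSpace ℝ (Fin d)) :
    ⟪x, gradient f x⟫ = fderiv ℝ f x x := by
  rw [real_inner_comm]
  exact InnerProductSpace.toDual_symm_apply


theorem stmt_10 (d : ℕ) (hd : 1 ≤ d) (c : ℝ) (hc : 0 < c) (T : ℝ) (hT : 0 < T)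
    (v₁ v₂ : EuclideanSpace ℝ (Fin d) → ℝ)
    (hv₁ : ContDiff ℝ (⊤ : ℕ∞) v₁) (hv₁s : HasCompactSupport v₁)
    (hv₂ : ContDiff ℝ (⊤ : ℕ∞) v₂) (hv₂s : HasCompactSupport v₂)
    (f g : ℝ → ℝ) (hf : ContinuousOn f (Set.Icc 0 T)) (hg : ContinuousOn g (Set.Icc 0 T))
    (hfpos : ∀ t ∈ Set.Icc 0 T, 0 < f t) (hgpos : ∀ t ∈ Set.Icc 0 T, 0 < g t)
    (hcond : ∀ t ∈ Set.Icc 0 T, f t - (g t) ^ 2 / (2 * c) ≥ 0)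
    (K : ℝ) (hK : K = d * sSup (f '' Set.Icc 0 T)) :
    ∀ t ∈ Set.Icc 0 T,
      2 * ∫ x, (v₁ x - v₂ x) *
          ((f t * (d * v₁ x + ⟪x, gradient v₁ x⟫) + (g t) ^ 2 / 2 * lapE d v₁ x)
            - (f t * (d * v₂ x + ⟪x, gradient v₂ x⟫) + (g t) ^ 2 / 2 * lapE d v₂ x)) * wgt d c x
        ≤ K * ∫ x, (v₁ x - v₂ x) ^ 2 * wgt d c x := by
  intro t ht
  have hu : ContDiff ℝ (⊤ : ℕ∞) (fun x => v₁ x - v₂ x) := hv₁.sub hv₂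
  have hus : HasCompactSupport (fun x => v₁ x - v₂ x) := hv₁s.comp₂_left hv₂s (sub_zero 0)
  have hFM : f t ≤ sSup (f '' Set.Icc 0 T) :=
    le_csSup (isCompact_Icc.bddAbove_image hf) (Set.mem_image_of_mem f ht)
  have hF : (0:ℝ) ≤ f t - (g t) ^ 2 / (2 * c) := hcond t ht
  have hkey := key_ineq d c hc (fun x => v₁ x - v₂ x) hu hus (f t) (g t)
    (sSup (f '' Set.Icc 0 T)) hF hFM
  rw [hK]
  refine le_trans (le_of_eq ?_) (le_trans hkey (le_of_eq ?_))
  · congr 1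
    refine integral_congr_ae (Filter.Eventually.of_forall fun x => ?_)
    have hg1 : ⟪x, gradient v₁ x⟫ = fderiv ℝ v₁ x x := inner_gradient_eq v₁ x
    have hg2 : ⟪x, gradient v₂ x⟫ = fderiv ℝ v₂ x x := inner_gradient_eq v₂ x
    have hsub : fderiv ℝ (fun y => v₁ y - v₂ y) x x = fderiv ℝ v₁ x x - fderiv ℝ v₂ x x := by
      rw [fderiv_fun_sub (hv₁.differentiable (by simp) x) (hv₂.differentiable (by simp) x)]
      simp
    have hlap : (∑ i, fderiv ℝ (fun y => fderiv ℝ (fun z => v₁ z - v₂ z) y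
          (EuclideanSpace.single i 1)) x (EuclideanSpace.single i 1))
        = lapE d v₁ x - lapE d v₂ x := by
      rw [lapE, lapE, ← Finset.sum_sub_distrib]
      refine Finset.sum_congr rfl fun i _ => ?_
      have e : (fun y => fderiv ℝ (fun z => v₁ z - v₂ z) y (EuclideanSpace.single i 1))
          = fun y => fderiv ℝ v₁ y (EuclideanSpace.single i 1)
            - fderiv ℝ v₂ y (EuclideanSpace.single i 1) := by
        funext y
        rw [fderiv_fun_sub (hv₁.differentiable (by simp) y) (hv₂.differentiable (by simp) y)]
        simp
      rw [e, fderiv_fun_sub ((contDiff_pderiv hv₁ _).differentiable (by simp) x)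
        ((contDiff_pderiv hv₂ _).differentiable (by simp) x)]
      simp
    simp only []
    rw [hg1, hg2, hlap, hsub]
    ring
  · congr 1
    refine integral_congr_ae (Filter.Eventually.of_forall fun x => ?_)
    simp only []
    ring
end

section
/- Let v : ℝᵈ → ℝ be smooth with compact support and c > 0. Then ∫ ‖∇v(x) + (x/c)·v(x)‖²·exp(‖x‖²/(2c)) dx = ∫ (‖∇v(x)‖² − (d/c)·v(x)²)·exp(‖x‖²/(2c)) dx; equivalently, the cross term satisfies (2/c)·∫ v(x)·(x·∇v(x))·exp(‖x‖²/(2c)) dx = −∫ ((d/c)·v(x)² + (‖x‖²/c²)·v(x)²)·exp(‖x‖²/(2c)) dx. -/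
open MeasureTheory RealInnerProductSpace

set_option autoImplicit false

variable {d : ℕ} {c : ℝ}

local notation "E" => EuclideanSpace ℝ (Fin d)

theorem hasFDerivAt_wgt' (hc : c ≠ 0) (x : E) :
    HasFDerivAt (fun x : E => Real.exp (‖x‖ ^ 2 / (2 * c)))
      (Real.exp (‖x‖ ^ 2 / (2 * c)) • ((1/c) • innerSL ℝ x)) x := by
  have h1 : HasFDerivAt (fun x : E => ‖x‖ ^ 2 / (2 * c))
      ((2*c)⁻¹ • (2 • (innerSL ℝ x))) x := by
    simp only [div_eq_mul_inv]
    exact ((hasStrictFDerivAt_norm_sq x).hasFDerivAt).mul_const _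
  have h2 := h1.exp
  convert h2 using 2
  ext y
  simp only [ContinuousLinearMap.smul_apply, one_div, smul_eq_mul, nsmul_eq_mul]
  push_cast
  field_simp
  module

theorem euclid_sum_single (x : E) : ∑ i, x i • EuclideanSpace.single i (1:ℝ) = x := by
  simpa [EuclideanSpace.basisFun_apply] using (EuclideanSpace.basisFun (Fin d) ℝ).sum_repr x

theorem euclid_sum_sq (x : E) : ∑ i, (x i)^2 = ‖x‖^2 := by
  rw [EuclideanSpace.norm_eq, Real.sq_sqrt (by positivity)]
  simp [sq_abs]

theorem wgt_contDiff_s17 (hc : 0 < c) : ContDiff ℝ (⊤ : ℕ∞) (fun x : E => Real.exp (‖x‖ ^ 2 / (2 * c))) :=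
  Real.contDiff_exp.comp ((contDiff_norm_sq (𝕜 := ℝ)).div_const _)

theorem master {d : ℕ} {c : ℝ} (hc : 0 < c) (v : EuclideanSpace ℝ (Fin d) → ℝ)
    (hv : ContDiff ℝ (⊤ : ℕ∞) v) (hvs : HasCompactSupport v) :
    (d:ℝ) * ∫ x, (v x)^2 * Real.exp (‖x‖ ^ 2 / (2 * c))
      = -∫ x, (2 * v x * fderiv ℝ v x x + (v x)^2 * ‖x‖^2 / c) * Real.exp (‖x‖ ^ 2 / (2 * c)) := by
  set W : EuclideanSpace ℝ (Fin d) → ℝ := fun x => Real.exp (‖x‖ ^ 2 / (2 * c)) with hW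
  set f : EuclideanSpace ℝ (Fin d) → ℝ := fun x => (v x)^2 * W x with hf
  have hvd : Differentiable ℝ v := hv.differentiable (by simp)
  have hWc : ContDiff ℝ (⊤ : ℕ∞) W := wgt_contDiff_s17 hc
  have hfc : ContDiff ℝ (⊤ : ℕ∞) f := (hv.pow 2).mul hWc
  have hfs : HasCompactSupport f :=
    (hvs.comp_left (g := (·^2)) (by simp)).mul_right
  -- derivative of f
  set F' : (EuclideanSpace ℝ (Fin d)) → (EuclideanSpace ℝ (Fin d) →L[ℝ] ℝ) := fun x =>
    (v x ^ 2) • (W x • ((1/c) • innerSL ℝ x)) + W x • ((2 * v x) • fderiv ℝ v x) with hF'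
  have hfd : ∀ x, HasFDerivAt f (F' x) x := by
    intro x
    have h1 : HasFDerivAt (fun x => v x ^ 2) ((2 * v x) • fderiv ℝ v x) x := by
      have h0 := ((hvd x).hasFDerivAt).mul ((hvd x).hasFDerivAt)
      simp only [← sq] at h0
      rw [two_mul, add_smul]
      exact h0
    exact h1.mul (hasFDerivAt_wgt' hc.ne' x)
  have hF'app : ∀ x i, F' x (EuclideanSpace.single i 1)
      = (v x ^ 2 * W x / c) * x i + 2 * v x * fderiv ℝ v x (EuclideanSpace.single i 1) * W x := by
    intro x i
    simp only [hF', ContinuousLinearMap.add_apply, ContinuousLinearMap.smul_apply, smul_eq_mul,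
      innerSL_apply_apply, EuclideanSpace.inner_single_right, RCLike.inner_apply, map_one]
    simp [real_inner_comm]
    ring
  -- continuity facts
  have hDvc : Continuous fun x => fderiv ℝ v x := (hv.fderiv_right (m := 0) (by simp)).continuous
  have hF'c : ∀ i : Fin d, Continuous fun x => F' x (EuclideanSpace.single i 1) := by
    intro i
    have : (fun x => F' x (EuclideanSpace.single i 1))
        = fun x => (v x ^ 2 * W x / c) * x i
            + 2 * v x * fderiv ℝ v x (EuclideanSpace.single i 1) * W x :=
      funext fun x => hF'app x i
    rw [this]
    fun_prop
  have hfds : HasCompactSupport fun x => fderiv ℝ f x := hfs.fderiv (𝕜 := ℝ)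
  have hF's : ∀ i : Fin d, HasCompactSupport fun x => F' x (EuclideanSpace.single i 1) := by
    intro i
    have : (fun x => F' x (EuclideanSpace.single i 1))
        = fun x => fderiv ℝ f x (EuclideanSpace.single i 1) :=
      funext fun x => by rw [(hfd x).fderiv]
    rw [this]
    exact hfs.fderiv_apply _ _
  have hcoord : ∀ i : Fin d, Continuous fun x : EuclideanSpace ℝ (Fin d) => x i :=
    fun i => (EuclideanSpace.proj (𝕜 := ℝ) i).continuous
  have hD_int : ∀ i : Fin d,
      Integrable (fun x => F' x (EuclideanSpace.single i 1) * x i) := by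
    intro i
    exact (((hF'c i).mul (hcoord i)).integrable_of_hasCompactSupport ((hF's i).mul_right))
  -- per-coordinate integration by parts
  have key : ∀ i : Fin d, ∫ x, f x = -∫ x, F' x (EuclideanSpace.single i 1) * x i := by
    intro i
    have hgF : ∀ x : EuclideanSpace ℝ (Fin d), HasFDerivAt (fun y : EuclideanSpace ℝ (Fin d) => y i)
        ((EuclideanSpace.proj i : EuclideanSpace ℝ (Fin d) →L[ℝ] ℝ)) x := fun x => by
      simpa using (EuclideanSpace.proj (𝕜 := ℝ) (i := i)).hasFDerivAt (x := x)
    have hgderiv : ∀ x : EuclideanSpace ℝ (Fin d), fderiv ℝ (fun y : EuclideanSpace ℝ (Fin d) => y i) x (EuclideanSpace.single i 1) = 1 :=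
      fun x => by rw [(hgF x).fderiv]; simp
    have h1 : Integrable (fun x => fderiv ℝ f x (EuclideanSpace.single i 1) * x i) := by
      have : (fun x => fderiv ℝ f x (EuclideanSpace.single i 1) * x i)
          = fun x => F' x (EuclideanSpace.single i 1) * x i :=
        funext fun x => by rw [(hfd x).fderiv]
      rw [this]; exact hD_int i
    have h2 : Integrable
        (fun x => f x * fderiv ℝ (fun y : EuclideanSpace ℝ (Fin d) => y i) x (EuclideanSpace.single i 1)) := by
      have : (fun x => f x * fderiv ℝ (fun y : EuclideanSpace ℝ (Fin d) => y i) x (EuclideanSpace.single i 1)) = f :=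
        funext fun x => by rw [hgderiv x, mul_one]
      rw [this]
      exact hfc.continuous.integrable_of_hasCompactSupport hfs
    have h3 : Integrable (fun x => f x * x i) :=
      (hfc.continuous.mul (hcoord i)).integrable_of_hasCompactSupport (hfs.mul_right)
    have := integral_mul_fderiv_eq_neg_fderiv_mul_of_integrable (μ := volume)
      h1 h2 h3 (fun x _ => hfc.differentiable (by simp) x) (fun x _ => (hgF x).differentiableAt)
    simp only [hgderiv, mul_one] at this
    rw [this]
    congr 1
    refine integral_congr_ae (Filter.Eventually.of_forall fun x => ?_)
    show (fderiv ℝ f x) (EuclideanSpace.single i 1) * x i = (F' x) (EuclideanSpace.single i 1) * x i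
    rw [(hfd x).fderiv]
  -- sum over coordinates
  have hfint : Integrable f := hfc.continuous.integrable_of_hasCompactSupport hfs
  have hsum : (d:ℝ) * ∫ x, f x = ∑ _i : Fin d, ∫ x, f x := by
    simp [Finset.sum_const, mul_comm]
  rw [hsum, Finset.sum_congr rfl (fun i _ => key i), Finset.sum_neg_distrib,
    ← integral_finset_sum _ (fun i _ => hD_int i)]
  · congr 1
    refine integral_congr_ae (Filter.Eventually.of_forall fun x => ?_)
    show ∑ i, F' x (EuclideanSpace.single i 1) * x i
        = (2 * v x * fderiv ℝ v x x + v x ^ 2 * ‖x‖ ^ 2 / c) * Real.exp (‖x‖ ^ 2 / (2 * c))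
    have hDx : fderiv ℝ v x x = ∑ i, x i * fderiv ℝ v x (EuclideanSpace.single i 1) := by
      set L := fderiv ℝ v x with hL
      conv_lhs => rw [← euclid_sum_single x]
      rw [map_sum]
      simp [smul_eq_mul]
    have hterm : ∀ i : Fin d, F' x (EuclideanSpace.single i 1) * x i
        = (v x ^ 2 * W x / c) * (x i)^2
          + (2 * v x * W x) * (x i * fderiv ℝ v x (EuclideanSpace.single i 1)) := by
      intro i; rw [hF'app]; ring
    rw [Finset.sum_congr rfl (fun i _ => hterm i), Finset.sum_add_distrib, ← Finset.mul_sum,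
      ← Finset.mul_sum, euclid_sum_sq, ← hDx]
    ring


theorem stmt_17 (d : ℕ) (hd : 1 ≤ d) (c : ℝ) (hc : 0 < c)
    (v : EuclideanSpace ℝ (Fin d) → ℝ) (hv : ContDiff ℝ (⊤ : ℕ∞) v) (hvs : HasCompactSupport v) :
    (∫ x, ‖gradient v x + (v x / c) • x‖ ^ 2 * Real.exp (‖x‖ ^ 2 / (2 * c))
        = ∫ x, (‖gradient v x‖ ^ 2 - (d / c) * (v x) ^ 2) * Real.exp (‖x‖ ^ 2 / (2 * c)))
    ∧ ((2 / c) * ∫ x, v x * ⟪x, gradient v x⟫ * Real.exp (‖x‖ ^ 2 / (2 * c))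
        = -∫ x, ((d / c) * (v x) ^ 2 + (‖x‖ ^ 2 / c ^ 2) * (v x) ^ 2) * Real.exp (‖x‖ ^ 2 / (2 * c))) := by
  have hc' : c ≠ 0 := hc.ne'
  set W : EuclideanSpace ℝ (Fin d) → ℝ := fun x => Real.exp (‖x‖ ^ 2 / (2 * c)) with hWdef
  have hvd : Differentiable ℝ v := hv.differentiable (by simp)
  have hWc : ContDiff ℝ (⊤ : ℕ∞) W := wgt_contDiff_s17 hc
  have hDvc : Continuous fun x => fderiv ℝ v x := (hv.fderiv_right (m := 0) (by simp)).continuous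
  have hgradc : Continuous fun x => gradient v x := by
    unfold gradient
    exact (InnerProductSpace.toDual ℝ (EuclideanSpace ℝ (Fin d))).symm.continuous.comp hDvc
  have hgrads : HasCompactSupport fun x => gradient v x := by
    have h := (hvs.fderiv (𝕜 := ℝ)).comp_left
      (g := fun L : (EuclideanSpace ℝ (Fin d)) →L[ℝ] ℝ =>
        (InnerProductSpace.toDual ℝ (EuclideanSpace ℝ (Fin d))).symm L) (by simp)
    exact h
  -- the four basic integrands
  set g0 : EuclideanSpace ℝ (Fin d) → ℝ := fun x => (v x)^2 * W x with hg0def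
  set g1 : EuclideanSpace ℝ (Fin d) → ℝ := fun x => ‖gradient v x‖^2 * W x with hg1def
  set g2 : EuclideanSpace ℝ (Fin d) → ℝ := fun x => v x * fderiv ℝ v x x * W x with hg2def
  set g3 : EuclideanSpace ℝ (Fin d) → ℝ := fun x => ‖x‖^2 * (v x)^2 * W x with hg3def
  have hvsq : HasCompactSupport fun x => (v x)^2 := hvs.comp_left (g := (·^2)) (by simp)
  have hg0i : Integrable g0 := by
    apply Continuous.integrable_of_hasCompactSupport (by fun_prop)
    exact hvsq.mul_right
  have hg1i : Integrable g1 := by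
    apply Continuous.integrable_of_hasCompactSupport (by fun_prop)
    exact (hgrads.comp_left (g := fun y => ‖y‖^2) (by simp)).mul_right
  have hg2i : Integrable g2 := by
    apply Continuous.integrable_of_hasCompactSupport
    · have : Continuous fun x => fderiv ℝ v x x := hDvc.clm_apply continuous_id
      fun_prop
    · exact (hvs.mul_right).mul_right
  have hg3i : Integrable g3 := by
    apply Continuous.integrable_of_hasCompactSupport (by fun_prop)
    exact ((hvsq.mul_left).mul_right)
  -- master identity
  have hM := master hc v hv hvs
  rw [show (fun x => (2 * v x * fderiv ℝ v x x + v x ^ 2 * ‖x‖ ^ 2 / c) * Real.exp (‖x‖ ^ 2 / (2 * c)))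
      = fun x => 2 * g2 x + (1/c) * g3 x from funext fun x => by simp only [hg2def, hg3def, hWdef]; ring]
      at hM
  rw [integral_add (hg2i.const_mul 2) (hg3i.const_mul (1/c)), integral_const_mul,
    integral_const_mul] at hM
  -- hM : d * ∫ g0 = -(2 * ∫ g2 + (1/c) * ∫ g3)
  have hinner : ∀ x, ⟪x, gradient v x⟫ = fderiv ℝ v x x := by
    intro x
    rw [real_inner_comm]
    exact InnerProductSpace.toDual_symm_apply
  constructor
  · have hLHS : ∫ x, ‖gradient v x + (v x / c) • x‖ ^ 2 * W x
        = ∫ x, (g1 x + ((2/c) * g2 x + (1/c^2) * g3 x)) := by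
      refine integral_congr_ae (Filter.Eventually.of_forall fun x => ?_)
      beta_reduce
      rw [norm_add_sq_real]
      rw [real_inner_smul_right, real_inner_comm x (gradient v x), hinner x, norm_smul]
      simp only [hg1def, hg2def, hg3def, Real.norm_eq_abs]
      rw [mul_pow, sq_abs]
      field_simp
      ring
    have hRHS : ∫ x, (‖gradient v x‖ ^ 2 - (d / c) * (v x) ^ 2) * W x
        = ∫ x, (g1 x - (d/c) * g0 x) := by
      refine integral_congr_ae (Filter.Eventually.of_forall fun x => ?_)
      simp only [hg1def, hg0def]
      ring
    have h23 : Integrable (fun x => (2/c) * g2 x + (1/c^2) * g3 x) :=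
      (hg2i.const_mul _).add (hg3i.const_mul _)
    rw [hLHS, hRHS, integral_add hg1i h23,
      integral_add (hg2i.const_mul _) (hg3i.const_mul _),
      integral_sub hg1i (hg0i.const_mul _), integral_const_mul, integral_const_mul,
      integral_const_mul]
    linear_combination (1/c) * hM
  · have hLHS : ∫ x, v x * ⟪x, gradient v x⟫ * W x = ∫ x, g2 x := by
      refine integral_congr_ae (Filter.Eventually.of_forall fun x => ?_)
      beta_reduce
      rw [hinner x]
    have hRHS : ∫ x, ((d / c) * (v x) ^ 2 + (‖x‖ ^ 2 / c ^ 2) * (v x) ^ 2) * W x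
        = ∫ x, ((d/c) * g0 x + (1/c^2) * g3 x) := by
      refine integral_congr_ae (Filter.Eventually.of_forall fun x => ?_)
      simp only [hg0def, hg3def]
      ring
    rw [hLHS, hRHS, integral_add (hg0i.const_mul _) (hg3i.const_mul _),
      integral_const_mul, integral_const_mul]
    linear_combination (1/c) * hM
end
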